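/- arXiv:1106.0874 — 3 statements merged into one kernel-verified Lean document; each statement's English description precedes it below -/
import Mathlib

section
/- (Four gametes test) Two 2-state characters a and b on a finite set of taxa X have a perfect phylogeny if and only if it is not the case that every one of the four pairs (i, j) ∈ Fin 2 × Fin 2 is realized by some taxon x ∈ X with a x = i and b x = j. -/
/-- A perfect phylogeny for a family of `k`-state characters `chars` (indexed by `F`)
on a finite set of taxa `X`: a finite tree `T` with a labeling `ℓ` of its vertices by
full state-assignments, such that every taxon's state-assignment occurs at some vertex,
and for each character and state the vertices carrying that state induce a connected
subgraph of `T`. -/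
def PerfectPhylogeny {X F : Type} [Fintype X] [Fintype F] (k : ℕ)
    (chars : F → X → Fin k) : Prop :=
  ∃ (V : Type) (_ : Fintype V) (T : SimpleGraph V) (ℓ : V → F → Fin k),
    T.IsTree ∧
    (∀ x : X, ∃ v : V, ∀ f : F, ℓ v f = chars f x) ∧
    ∀ (f : F) (s : Fin k), (T.induce {v : V | ℓ v f = s}).Preconnected

/-- Two characters `a, b` have a perfect phylogeny (as a two-member family). -/
def PairPP {X : Type} [Fintype X] (k : ℕ) (a b : X → Fin k) : Prop :=
  PerfectPhylogeny k ![a, b]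

/-- The subfamily of `chars` indexed by the finite set `S` has a perfect phylogeny. -/
def SubPP {X F : Type} [Fintype X] [Fintype F] (k : ℕ) (chars : F → X → Fin k)
    (S : Finset F) : Prop :=
  PerfectPhylogeny k (fun f : {x // x ∈ S} => chars f.1)

/-- A family of characters is pairwise compatible if every two of its characters
have a perfect phylogeny. -/
def PairwiseCompatible {X F : Type} [Fintype X] [Fintype F] (k : ℕ)
    (chars : F → X → Fin k) : Prop :=
  ∀ a b : F, a ≠ b → PairPP k (chars a) (chars b)

/-- The partition intersection graph of two characters `a, b`.  The vertex `(false, i)`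
represents state `i` of `a` and `(true, j)` represents state `j` of `b`; there is an
edge between `(false, i)` and `(true, j)` exactly when some taxon has state `i` for `a`
and state `j` for `b`, and no edges between vertices of the same character. -/
def pig {X : Type} {k : ℕ} (a b : X → Fin k) : SimpleGraph (Bool × Fin k) where
  Adj u v :=
    (u.1 = false ∧ v.1 = true ∧ ∃ x, a x = u.2 ∧ b x = v.2) ∨
    (u.1 = true ∧ v.1 = false ∧ ∃ x, a x = v.2 ∧ b x = u.2)
  symm := by
    constructor
    rintro ⟨ub, us⟩ ⟨vb, vs⟩ (⟨h1, h2, x, hx⟩ | ⟨h1, h2, x, hx⟩) <;>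
      subst h1 <;> subst h2
    · exact Or.inr ⟨rfl, rfl, x, hx⟩
    · exact Or.inl ⟨rfl, rfl, x, hx⟩
  loopless := by
    constructor
    rintro ⟨ub, us⟩ (⟨h1, h2, -⟩ | ⟨h1, h2, -⟩) <;> simp_all

/-- The binarized character `c(i)` of a 3-state character `c`: state `0` on taxa
where `c` has state `i`, and state `1` elsewhere. -/
def bin {X : Type} (c : X → Fin 3) (i : Fin 3) : X → Fin 2 :=
  fun x => if c x = i then 0 else 1

/-- State `i` of character `c` (of the family `chars`) is dependent: some character `d`
has two distinct states `j, k` such that `c(i)` is incompatible with both `d(j)` and `d(k)`. -/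
def DependentState {X F : Type} [Fintype X] [Fintype F] (chars : F → X → Fin 3)
    (c : F) (i : Fin 3) : Prop :=
  ∃ (d : F) (j k : Fin 3), j ≠ k ∧
    ¬ PairPP 2 (bin (chars c) i) (bin (chars d) j) ∧
    ¬ PairPP 2 (bin (chars c) i) (bin (chars d) k)

/-- `d` is a witness that state `i` of `c` is dependent. -/
def WitnessOf {X F : Type} [Fintype X] [Fintype F] (chars : F → X → Fin 3)
    (c : F) (i : Fin 3) (d : F) : Prop :=
  ∃ j k : Fin 3, j ≠ k ∧
    ¬ PairPP 2 (bin (chars c) i) (bin (chars d) j) ∧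
    ¬ PairPP 2 (bin (chars c) i) (bin (chars d) k)

/-- The graph `G` contains a path of length four (five pairwise distinct vertices,
four edges) whose middle vertex is `m`. -/
def HasPathLen4Mid {V : Type} (G : SimpleGraph V) (m : V) : Prop :=
  ∃ p : Fin 5 → V, Function.Injective p ∧
    (∀ t : Fin 4, G.Adj (p t.castSucc) (p t.succ)) ∧ p 2 = m

/-- Some taxon realizes the pair of states `(i, j)` for the pair of characters `(u, v)`. -/
def realizes {X : Type} (u v : X → Fin 3) (i j : Fin 3) : Prop :=
  ∃ t, u t = i ∧ v t = j


/-!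
In a perfect phylogeny the two state classes of each binary character are subtrees partitioning
the tree, so at most one edge joins the two classes of `b`. A walk inside the subtree `a = 0`
from a `(0, 0)`-vertex to a `(0, 1)`-vertex must use such an edge, and so must a walk inside
`a = 1` from a `(1, 0)`-vertex to a `(1, 1)`-vertex; these two edges share their `b = 0` end,
which would then have both states of `a`.

Conversely, if the combination `c` is realized by no taxon, the star on the three other
combinations centred at the complement of `c` is a perfect phylogeny: each state class of a
character either contains the centre or is a single leaf.
-/

namespace SimpleGraph

variable {V : Type} {G : SimpleGraph V}

theorem Preconnected.exists_walk_support_subset {s : Set V} (hs : (G.induce s).Preconnected)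
    {u v : V} (hu : u ∈ s) (hv : v ∈ s) : ∃ p : G.Walk u v, ∀ w ∈ p.support, w ∈ s := by
  obtain ⟨q⟩ := hs ⟨u, hu⟩ ⟨v, hv⟩
  refine ⟨q.map (Embedding.induce s).toHom, fun w hw => ?_⟩
  obtain ⟨w', -, rfl⟩ := List.mem_map.mp (q.support_map _ ▸ hw)
  exact w'.2

theorem Preconnected.exists_adj_mem_notMem {s t : Set V} (hs : (G.induce s).Preconnected)
    {u v : V} (hu : u ∈ s) (hv : v ∈ s) (hut : u ∈ t) (hvt : v ∉ t) :
    ∃ x ∈ s, ∃ y ∈ s, x ∈ t ∧ y ∉ t ∧ G.Adj x y := by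
  obtain ⟨p, hp⟩ := hs.exists_walk_support_subset hu hv
  obtain ⟨d, hd, hxt, hyt⟩ := p.exists_boundary_dart t hut hvt
  exact ⟨d.fst, hp _ (p.dart_fst_mem_support_of_mem_darts hd),
    d.snd, hp _ (p.dart_snd_mem_support_of_mem_darts hd), hxt, hyt, d.adj⟩

theorem IsAcyclic.eq_of_adj_of_adj (hG : G.IsAcyclic) {s t : Set V}
    (hs : (G.induce s).Preconnected) (ht : (G.induce t).Preconnected) (hst : Disjoint s t)
    {u u' v v' : V} (hu : u ∈ s) (hu' : u' ∈ s) (hv : v ∈ t) (hv' : v' ∈ t)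
    (huv : G.Adj u v) (huv' : G.Adj u' v') : u = u' ∧ v = v' := by
  by_contra hne
  obtain ⟨p, hp⟩ := hs.exists_walk_support_subset hu hu'
  obtain ⟨q, hq⟩ := ht.exists_walk_support_subset hv' hv
  -- the bridge `s(u, v)` would have to lie on this walk from `u` to `v`
  have hmem := isBridge_iff_forall_walk_mem_edges.mp
    (isAcyclic_iff_forall_adj_isBridge.mp hG huv) (p.append (.cons huv' q))
  rw [Walk.edges_append, Walk.edges_cons, List.mem_append, List.mem_cons, Sym2.eq_iff] at hmem
  rcases hmem with hp' | (⟨rfl, rfl⟩ | ⟨rfl, -⟩) | hq'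
  · exact hst.notMem_of_mem_left (hp _ (p.snd_mem_support_of_mem_edges hp')) hv
  · exact hne ⟨rfl, rfl⟩
  · exact hst.notMem_of_mem_left hu hv'
  · exact hst.notMem_of_mem_left hu (hq _ (q.fst_mem_support_of_mem_edges hq'))

theorem IsAcyclic.not_forall_exists_of_preconnected (hG : G.IsAcyclic) (a b : V → Fin 2)
    (ha : ∀ i, (G.induce {v | a v = i}).Preconnected)
    (hb : ∀ j, (G.induce {v | b v = j}).Preconnected) :
    ¬ ∀ i j, ∃ v, a v = i ∧ b v = j := by
  intro hall
  have crossing (i : Fin 2) : ∃ x y, a x = i ∧ b x = 0 ∧ b y = 1 ∧ G.Adj x y := by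
    obtain ⟨u, hua, hub⟩ := hall i 0
    obtain ⟨v, hva, hvb⟩ := hall i 1
    obtain ⟨x, hxa, y, -, hxb, hyb, hxy⟩ :=
      (ha i).exists_adj_mem_notMem (t := {v | b v = 0}) hua hva hub (by simp [hvb])
    exact ⟨x, y, hxa, hxb, Fin.eq_one_of_ne_zero _ hyb, hxy⟩
  obtain ⟨x₀, y₀, hx₀, hx₀b, hy₀b, hxy₀⟩ := crossing 0
  obtain ⟨x₁, y₁, hx₁, hx₁b, hy₁b, hxy₁⟩ := crossing 1
  have hdisj : Disjoint {v | b v = 0} {v | b v = 1} :=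
    Set.disjoint_left.mpr fun v h0 h1 => zero_ne_one (h0.symm.trans h1)
  obtain ⟨rfl, -⟩ := hG.eq_of_adj_of_adj (hb 0) (hb 1) hdisj hx₀b hx₁b hy₀b hy₁b hxy₀ hxy₁
  exact zero_ne_one (hx₀.symm.trans hx₁)

theorem preconnected_induce_starGraph {r : V} {s : Set V} (h : r ∈ s ∨ s.Subsingleton) :
    ((starGraph r).induce s).Preconnected := by
  rcases h with hr | hs
  · have hcenter (u : s) : ((starGraph r).induce s).Reachable u ⟨r, hr⟩ := by
      obtain ⟨u, hu⟩ := u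
      by_cases hur : u = r
      · subst hur; rfl
      · exact Adj.reachable (by simpa using hur)
    exact fun u v => (hcenter u).trans (hcenter v).symm
  · rintro ⟨u, hu⟩ ⟨v, hv⟩
    obtain rfl := hs hu hv
    rfl

end SimpleGraph

theorem Fin.two_pi_eq_of_ne_of_apply_eq {p q c : Fin 2 → Fin 2} {f : Fin 2} (hp : p ≠ c)
    (hq : q ≠ c) (hpf : p f = c f) (hqf : q f = c f) : p = q := by
  fin_cases f <;>
    simp only [ne_eq, funext_iff, Fin.forall_fin_two, Fin.zero_eta, Fin.mk_one] at * <;> omega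

theorem perfectPhylogeny_of_forall_ne {X : Type} [Fintype X] (chars : Fin 2 → X → Fin 2)
    (c : Fin 2 → Fin 2) (hc : ∀ x, (fun f => chars f x) ≠ c) : PerfectPhylogeny 2 chars := by
  let center : {p : Fin 2 → Fin 2 // p ≠ c} :=
    ⟨fun f => c f + 1, fun h => by simpa using congrFun h 0⟩
  refine ⟨{p // p ≠ c}, inferInstance, SimpleGraph.starGraph center, Subtype.val,
    SimpleGraph.isTree_starGraph center, fun x => ⟨⟨_, hc x⟩, fun _ => rfl⟩, fun f s => ?_⟩
  apply SimpleGraph.preconnected_induce_starGraph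
  by_cases hs : s = c f
  · subst hs
    exact Or.inr fun p hp q hq => Subtype.ext (Fin.two_pi_eq_of_ne_of_apply_eq p.2 q.2 hp hq)
  · left
    show c f + 1 = s
    omega

/-- four gametes test: two 2-state characters have a perfect phylogeny iff
not all four combinations of states are realized by taxa. -/
theorem four_gametes_test {X : Type} [Fintype X] (a b : X → Fin 2) :
    PairPP 2 a b ↔ ¬ (∀ i j : Fin 2, ∃ x : X, a x = i ∧ b x = j) := by
  constructor
  · rintro ⟨V, _, T, ℓ, hT, hcover, hconn⟩ hall
    refine hT.isAcyclic.not_forall_exists_of_preconnected (ℓ · 0) (ℓ · 1) (hconn 0) (hconn 1)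
      fun i j => ?_
    obtain ⟨x, rfl, rfl⟩ := hall i j
    obtain ⟨v, hv⟩ := hcover x
    exact ⟨v, hv 0, hv 1⟩
  · intro h
    push Not at h
    obtain ⟨i, j, hij⟩ := h
    exact perfectPhylogeny_of_forall_ne ![a, b] ![i, j]
      fun x hx => hij x (congrFun hx 0) (congrFun hx 1)
end

section
/- (Dress–Steel) A finite family M of 3-state characters on a finite set of taxa X has a perfect phylogeny if and only if there exists a set C of binarized characters of M such that (i) every two characters in C have a perfect phylogeny (as a pair of 2-state characters), and (ii) for each character c of M, at least two of the three binarized characters c(0), c(1), c(2) belong to C. -/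
/-!
A perfect phylogeny `(T, ℓ)` of the 3-state characters displays the binarization `c(i)` as soon
as the complement of the `i`-class of `c` is connected, and binarizations displayed on one tree are
compatible. Since `T` and the three classes of `c` are connected, at most one state of `c` has a
disconnected complement.

Conversely, pick for every `c` two states `i ≠ j` with `c(i), c(j) ∈ C`. These binary characters
are pairwise compatible, hence have a perfect phylogeny (splits equivalence): rooted at a taxon
`x₀`, the sides not containing `x₀` form a laminar family by the four-gamete condition, and the
Hasse diagram of this family, with the whole set added as its top, is a tree. On that tree `c` is
read off as `i` where `c(i) = 0`, else `j` where `c(j) = 0`, else the third state; each of its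
classes is an intersection of two subtrees, hence a subtree.
-/

open SimpleGraph Finset

namespace SimpleGraph

section Induce

variable {V : Type*} {G : SimpleGraph V} {s t : Set V}

lemma reachable_induce_iff {u v : s} :
    (G.induce s).Reachable u v ↔ ∃ p : G.Walk u v, ∀ x ∈ p.support, x ∈ s := by
  constructor
  · rintro ⟨p⟩
    induction p with
    | nil => exact ⟨.nil, by simp⟩
    | @cons a _ _ h _ ih =>
      obtain ⟨q, hq⟩ := ih
      refine ⟨.cons (induce_adj.1 h) q, ?_⟩
      simp only [Walk.support_cons, List.mem_cons, forall_eq_or_imp]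
      exact ⟨a.2, hq⟩
  · rintro ⟨p, hp⟩
    exact ⟨p.induce s hp⟩

lemma IsAcyclic.preconnected_induce_inter (hG : G.IsAcyclic) (hs : (G.induce s).Preconnected)
    (ht : (G.induce t).Preconnected) : (G.induce (s ∩ t)).Preconnected := by
  classical
  rintro ⟨u, hus, hut⟩ ⟨v, hvs, hvt⟩
  obtain ⟨p, hp⟩ := reachable_induce_iff.1 (hs ⟨u, hus⟩ ⟨v, hvs⟩)
  obtain ⟨q, hq⟩ := reachable_induce_iff.1 (ht ⟨u, hut⟩ ⟨v, hvt⟩)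
  -- paths in a forest are unique, so the path inside `s` is also the path inside `t`
  have hpq : p.toPath = q.toPath := (hG.subsingleton_path u v).elim _ _
  refine reachable_induce_iff.2 ⟨p.toPath, fun x hx => ⟨hp x ?_, hq x ?_⟩⟩
  · exact p.support_toPath_subset_support hx
  · exact q.support_toPath_subset_support (hpq ▸ hx)

lemma IsAcyclic.boundary_dart_unique (hG : G.IsAcyclic) (hs : (G.induce s).Preconnected)
    (hsc : (G.induce sᶜ).Preconnected) {d d' : G.Dart} (hd : d.fst ∈ s ∧ d.snd ∉ s)
    (hd' : d'.fst ∈ s ∧ d'.snd ∉ s) : d = d' := by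
  obtain ⟨p, hp⟩ := reachable_induce_iff.1 (hs ⟨_, hd.1⟩ ⟨_, hd'.1⟩)
  obtain ⟨q, hq⟩ := reachable_induce_iff.1 (hsc ⟨_, hd'.2⟩ ⟨_, hd.2⟩)
  -- `d` is a bridge, yet `d.fst ⇝ d'.fst` inside `s`, then `d'`, then `d'.snd ⇝ d.snd`
  -- outside `s` is a walk that can only use `d` as its middle edge
  have hbridge := isBridge_iff_forall_walk_mem_edges.1
    (isAcyclic_iff_forall_adj_isBridge.1 hG d.adj)
  have hmem := hbridge (p.append (.cons d'.adj q))
  simp only [Walk.edges_append, Walk.edges_cons, List.mem_append, List.mem_cons] at hmem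
  rcases hmem with hmem | hmem | hmem
  · exact absurd (hp _ (p.snd_mem_support_of_mem_edges hmem)) hd.2
  · rcases Sym2.eq_iff.1 hmem with ⟨h1, h2⟩ | ⟨h1, -⟩
    · exact Dart.ext _ _ (Prod.ext h1 h2)
    · exact absurd (h1 ▸ hd.1) hd'.2
  · exact absurd hd.1 (hq _ (q.fst_mem_support_of_mem_edges hmem))

lemma Preconnected.preconnected_induce_union_or (hG : G.Preconnected) {S T U : Set V}
    (hS : (G.induce S).Preconnected) (hT : (G.induce T).Preconnected)
    (hU : (G.induce U).Preconnected) (hcover : ∀ v, v ∈ S ∨ v ∈ T ∨ v ∈ U) :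
    (G.induce (S ∪ T)).Preconnected ∨ (G.induce (T ∪ U)).Preconnected := by
  rcases T.eq_empty_or_nonempty with rfl | ⟨t, ht⟩
  · exact Or.inl (by rwa [Set.union_empty])
  by_cases hall : ∀ v, v ∈ T
  · exact Or.inl (by rwa [Set.union_eq_self_of_subset_left fun v _ => hall v])
  push Not at hall
  obtain ⟨w, hw⟩ := hall
  obtain ⟨d, -, hdT, hdT'⟩ := (hG t w).some.exists_boundary_dart T ht hw
  rcases hcover d.snd with hdS | hdT'' | hdU
  · exact Or.inl (connected_induce_union hS hT hdS hdT d.adj.symm).preconnected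
  · exact absurd hdT'' hdT'
  · exact Or.inr (connected_induce_union hT hU hdT hdU d.adj).preconnected

/-- Only one edge leaves the connected cell `K ∩ L`, whose complement `Kᶜ ∪ Lᶜ` is connected
too; but one edge leaves it inside `K` towards `z` and another inside `L` towards `y`. -/
lemma IsAcyclic.not_four_gametes (hG : G.IsAcyclic) {K L : Set V}
    (hK : (G.induce K).Preconnected) (hKc : (G.induce Kᶜ).Preconnected)
    (hL : (G.induce L).Preconnected) (hLc : (G.induce Lᶜ).Preconnected) {w x y z : V}
    (hw : w ∈ K ∩ L) (hx : x ∈ Kᶜ ∩ Lᶜ) (hy : y ∈ Kᶜ ∩ L) (hz : z ∈ K ∩ Lᶜ) : False := by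
  have hcell := hG.preconnected_induce_inter hK hL
  have hcellc : (G.induce (K ∩ L)ᶜ).Preconnected := by
    rw [Set.compl_inter]
    exact (induce_union_connected hKc hLc ⟨x, hx⟩).preconnected
  obtain ⟨p, hp⟩ := reachable_induce_iff.1 (hK ⟨w, hw.1⟩ ⟨z, hz.1⟩)
  obtain ⟨q, hq⟩ := reachable_induce_iff.1 (hL ⟨w, hw.2⟩ ⟨y, hy.2⟩)
  obtain ⟨d, hdp, hd⟩ := p.exists_boundary_dart _ hw fun h => hz.2 h.2
  obtain ⟨d', hdq, hd'⟩ := q.exists_boundary_dart _ hw fun h => hy.1 h.1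
  have hdd' := hG.boundary_dart_unique hcell hcellc hd hd'
  have hdK := hp _ (p.dart_snd_mem_support_of_mem_darts hdp)
  have hdL := hq _ (q.dart_snd_mem_support_of_mem_darts hdq)
  exact hd.2 ⟨hdK, hdd' ▸ hdL⟩

lemma Preconnected.exists_two_preconnected_induce_ne (hG : G.Preconnected) {κ : V → Fin 3}
    (hκ : ∀ s, (G.induce {v | κ v = s}).Preconnected) :
    ∃ i j, i ≠ j ∧ (G.induce {v | κ v ≠ i}).Preconnected ∧
      (G.induce {v | κ v ≠ j}).Preconnected := by
  have key : ∀ a c : Fin 3, a ≠ c →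
      (G.induce {v | κ v ≠ a}).Preconnected ∨ (G.induce {v | κ v ≠ c}).Preconnected := by
    intro a c hac
    obtain ⟨b, hcover⟩ : ∃ b, ∀ u : Fin 3,
        (u ≠ c ↔ u = a ∨ u = b) ∧ (u ≠ a ↔ u = b ∨ u = c) := by
      revert a c; decide
    have hne_c : {v | κ v ≠ c} = {v | κ v = a} ∪ {v | κ v = b} :=
      Set.ext fun v => (hcover (κ v)).1
    have hne_a : {v | κ v ≠ a} = {v | κ v = b} ∪ {v | κ v = c} :=
      Set.ext fun v => (hcover (κ v)).2
    rw [hne_a, hne_c, or_comm]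
    refine hG.preconnected_induce_union_or (hκ a) (hκ b) (hκ c) fun v => ?_
    by_cases h : κ v = a
    · exact Or.inl h
    · exact Or.inr ((hcover (κ v)).2.1 h)
  by_cases h0 : (G.induce {v | κ v ≠ 0}).Preconnected
  · rcases key 1 2 (by decide) with h | h
    exacts [⟨0, 1, by decide, h0, h⟩, ⟨0, 2, by decide, h0, h⟩]
  · exact ⟨1, 2, by decide, (key 0 1 (by decide)).resolve_left h0,
      (key 0 2 (by decide)).resolve_left h0⟩

lemma IsAcyclic.preconnected_induce_ite {α : Type*} (hG : G.IsAcyclic) {p q : V → Fin 2}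
    (hp : ∀ s, (G.induce {v | p v = s}).Preconnected)
    (hq : ∀ s, (G.induce {v | q v = s}).Preconnected) {a b c : α} (hab : a ≠ b) (hac : a ≠ c)
    (hbc : b ≠ c) (s : α) :
    (G.induce {v | (if p v = 0 then a else if q v = 0 then b else c) = s}).Preconnected := by
  have hone : ∀ u : Fin 2, u = 1 ↔ u ≠ 0 := by decide
  set S := {v | (if p v = 0 then a else if q v = 0 then b else c) = s}
  by_cases hsa : s = a
  · have : S = {v | p v = 0} := by
      ext v; by_cases p v = 0 <;> by_cases q v = 0 <;> simp [S, *, hab.symm, hac.symm]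
    exact this ▸ hp 0
  by_cases hsb : s = b
  · have : S = {v | p v = 1} ∩ {v | q v = 0} := by
      ext v; by_cases p v = 0 <;> by_cases q v = 0 <;> simp [S, *, hbc.symm]
    exact this ▸ hG.preconnected_induce_inter (hp 1) (hq 0)
  by_cases hsc : s = c
  · have : S = {v | p v = 1} ∩ {v | q v = 1} := by
      ext v; by_cases p v = 0 <;> by_cases q v = 0 <;> simp [S, *]
    exact this ▸ hG.preconnected_induce_inter (hp 1) (hq 1)
  · have : S = ∅ := by
      ext v; simp only [S, Set.mem_ofPred_eq, Set.mem_empty_iff_false, iff_false]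
      split_ifs <;> simp [Ne.symm, *]
    exact this ▸ Preconnected.of_subsingleton

end Induce

section Hasse

variable {α : Type*} [PartialOrder α]

lemma hasse_reachable_induce_of_le [Finite α] {S : Set α} {a b : α} (hab : a ≤ b)
    (hS : Set.Icc a b ⊆ S) :
    ((hasse α).induce S).Reachable ⟨a, hS ⟨le_rfl, hab⟩⟩ ⟨b, hS ⟨hab, le_rfl⟩⟩ := by
  induction a using WellFoundedGT.induction with
  | _ a ih =>
    rcases hab.eq_or_lt with rfl | hlt
    · rfl
    obtain ⟨c, hac, hcb⟩ := exists_covBy_le_of_lt hlt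
    have hcS : Set.Icc c b ⊆ S := (Set.Icc_subset_Icc_left hac.le).trans hS
    have hadj : ((hasse α).induce S).Adj ⟨a, hS ⟨le_rfl, hab⟩⟩ ⟨c, hcS ⟨le_rfl, hcb⟩⟩ :=
      induce_adj.2 (Or.inl hac)
    exact hadj.reachable.trans (ih c hac.lt hcb hcS)

lemma Set.OrdConnected.preconnected_induce_hasse [Finite α] {S : Set α} (hS : S.OrdConnected)
    (hdir : DirectedOn (· ≤ ·) S) : ((hasse α).induce S).Preconnected := by
  rintro ⟨a, ha⟩ ⟨b, hb⟩
  obtain ⟨m, hm, ham, hbm⟩ := hdir a ha b hb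
  exact (hasse_reachable_induce_of_le ham (hS.out ha hm)).trans
    (hasse_reachable_induce_of_le hbm (hS.out hb hm)).symm

lemma IsUpperSet.preconnected_induce_hasse [Finite α] [OrderTop α] {S : Set α}
    (hS : IsUpperSet S) : ((hasse α).induce S).Preconnected :=
  hS.ordConnected.preconnected_induce_hasse fun _ ha _ _ =>
    ⟨⊤, hS le_top ha, le_top, le_top⟩

lemma hasse_connected [Finite α] [OrderTop α] : (hasse α).Connected := by
  refine ⟨fun a b => ?_⟩
  have h := isUpperSet_univ.preconnected_induce_hasse (α := α) ⟨a, trivial⟩ ⟨b, trivial⟩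
  exact h.map (Embedding.induce _).toHom

/-- Every edge `a ⋖ b` is a bridge: it is the only edge leaving `Set.Iic a`. -/
lemma hasse_isAcyclic (h : ∀ a : α, IsChain (· ≤ ·) (Set.Ici a)) : (hasse α).IsAcyclic := by
  refine isAcyclic_iff_forall_adj_isBridge.2 ?_
  suffices ∀ a b : α, a ⋖ b → (hasse α).IsBridge s(a, b) by
    rintro a b (hab | hba)
    · exact this a b hab
    · exact Sym2.eq_swap ▸ this b a hba
  intro a b hab
  refine isBridge_iff_forall_walk_mem_edges.2 fun p => ?_
  obtain ⟨d, hd, hda, hdb⟩ := p.exists_boundary_dart (Set.Iic a) le_rfl hab.lt.not_ge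
  rcases d.adj with hcov | hcov
  · have had : a ≤ d.snd := ((h d.fst).total hda hcov.le).resolve_right hdb
    have hlt : a < d.snd := lt_of_le_of_ne had fun e => hdb (e ▸ le_rfl)
    have hfst : d.fst = a := by
      by_contra hne
      exact hcov.2 (lt_of_le_of_ne hda hne) hlt
    have hcov' : a ⋖ d.snd := hfst ▸ hcov
    have hsnd : d.snd = b := by
      rcases (h a).total hcov'.le hab.le with h1 | h1
      · exact (hab.wcovBy.eq_or_eq had h1).resolve_left hlt.ne'
      · exact ((hcov'.wcovBy.eq_or_eq hab.le h1).resolve_left hab.lt.ne').symm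
    have hedge : d.edge = s(a, b) := by rw [← hfst, ← hsnd]; rfl
    rw [Walk.edges_eq_map_darts, ← hedge]
    exact List.mem_map_of_mem hd
  · exact absurd (hcov.le.trans hda) hdb

lemma hasse_isTree [Finite α] [OrderTop α] (h : ∀ a : α, IsChain (· ≤ ·) (Set.Ici a)) :
    (hasse α).IsTree :=
  ⟨hasse_connected, hasse_isAcyclic h⟩

end Hasse

end SimpleGraph

lemma bin_eq_zero_iff {X : Type} {c : X → Fin 3} {i : Fin 3} {x : X} :
    bin c i x = 0 ↔ c x = i := by
  unfold bin; split_ifs <;> simp_all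

lemma bin_eq_one_iff {X : Type} {c : X → Fin 3} {i : Fin 3} {x : X} :
    bin c i x = 1 ↔ c x ≠ i := by
  unfold bin; split_ifs <;> simp_all

lemma preconnected_induce_bin_eq {V : Type} {G : SimpleGraph V} {κ : V → Fin 3} {i : Fin 3}
    (h : (G.induce {v | κ v = i}).Preconnected) (hc : (G.induce {v | κ v ≠ i}).Preconnected)
    (s : Fin 2) : (G.induce {v | bin κ i v = s}).Preconnected := by
  rcases (by decide : ∀ s : Fin 2, s = 0 ∨ s = 1) s with rfl | rfl
  · rwa [show {v | bin κ i v = 0} = {v | κ v = i} from Set.ext fun _ => bin_eq_zero_iff]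
  · rwa [show {v | bin κ i v = 1} = {v | κ v ≠ i} from Set.ext fun _ => bin_eq_one_iff]

section Phylogeny

variable {X F : Type} [Fintype X] [Fintype F]

lemma PerfectPhylogeny.of_isEmpty [IsEmpty X] (k : ℕ) [NeZero k] (chars : F → X → Fin k) :
    PerfectPhylogeny k chars :=
  ⟨Unit, inferInstance, ⊥, fun _ _ => 0, .of_subsingleton, isEmptyElim,
    fun _ _ => .of_subsingleton⟩

lemma pairPP_comp_of_isTree {V : Type} [Fintype V] {T : SimpleGraph V} (hT : T.IsTree)
    {k : ℕ} {β γ : V → Fin k} (hβ : ∀ s, (T.induce {v | β v = s}).Preconnected)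
    (hγ : ∀ s, (T.induce {v | γ v = s}).Preconnected) (τ : X → V) :
    PairPP k (β ∘ τ) (γ ∘ τ) :=
  ⟨V, inferInstance, T, fun v => ![β v, γ v], hT, fun x => ⟨τ x, fun i => by fin_cases i <;> rfl⟩,
    fun i s => by fin_cases i; exacts [hβ s, hγ s]⟩

lemma PairPP.setOf_ne_subset_or_subset {a b : X → Fin 2} (h : PairPP 2 a b) (w : X)
    (hx : ∃ x, a x ≠ a w ∧ b x ≠ b w) :
    {y | a y ≠ a w} ⊆ {y | b y ≠ b w} ∨ {y | b y ≠ b w} ⊆ {y | a y ≠ a w} := by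
  obtain ⟨V, _, T, ℓ, hT, hτ, hℓ⟩ := h
  choose τ hτ using hτ
  have hcompl : ∀ (i t : Fin 2), (T.induce {v | ℓ v i = t}ᶜ).Preconnected := by
    intro i t
    have : {v | ℓ v i = t}ᶜ = {v | ℓ v i = t.rev} := by
      ext v
      exact (by decide : ∀ u t : Fin 2, u ≠ t ↔ u = t.rev) _ _
    rw [this]
    exact hℓ i _
  rw [Set.ofPred_subset_ofPred, Set.ofPred_subset_ofPred]
  by_contra! hcon
  obtain ⟨x, hxa, hxb⟩ := hx
  obtain ⟨⟨y, hya, hyb⟩, ⟨z, hzb, hza⟩⟩ := hcon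
  refine hT.isAcyclic.not_four_gametes (hℓ 0 (a w)) (hcompl 0 (a w)) (hℓ 1 (b w))
    (hcompl 1 (b w)) (w := τ w) (x := τ x) (y := τ y) (z := τ z) ?_ ?_ ?_ ?_ <;>
    simp [*]

theorem PerfectPhylogeny.exists_binarized_selection {chars : F → X → Fin 3}
    (h : PerfectPhylogeny 3 chars) :
    ∃ C : Finset (F × Fin 3),
      (∀ p ∈ C, ∀ q ∈ C, PairPP 2 (bin (chars p.1) p.2) (bin (chars q.1) q.2)) ∧
      (∀ f : F, ∃ i j : Fin 3, i ≠ j ∧ (f, i) ∈ C ∧ (f, j) ∈ C) := by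
  classical
  obtain ⟨V, _, T, ℓ, hT, hτ, hℓ⟩ := h
  choose τ hτ using hτ
  have hbin : ∀ f i, bin (fun v => ℓ v f) i ∘ τ = bin (chars f) i :=
    fun f i => funext fun x => by simp [bin, hτ]
  refine ⟨univ.filter fun p => (T.induce {v | ℓ v p.1 ≠ p.2}).Preconnected, ?_, fun f => ?_⟩
  · intro p hp q hq
    rw [← hbin, ← hbin]
    exact pairPP_comp_of_isTree hT (preconnected_induce_bin_eq (hℓ _ _) (mem_filter.1 hp).2)
      (preconnected_induce_bin_eq (hℓ _ _) (mem_filter.1 hq).2) τ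
  · obtain ⟨i, j, hij, hi, hj⟩ :=
      hT.connected.preconnected.exists_two_preconnected_induce_ne (hℓ f)
    exact ⟨i, j, hij, mem_filter.2 ⟨mem_univ _, hi⟩, mem_filter.2 ⟨mem_univ _, hj⟩⟩

theorem PerfectPhylogeny.of_binarized {chars : F → X → Fin 3} (C : Finset (F × Fin 3))
    (hC : ∀ f, ∃ i j, i ≠ j ∧ (f, i) ∈ C ∧ (f, j) ∈ C)
    (h : PerfectPhylogeny 2 fun p : C => bin (chars p.1.1) p.1.2) :
    PerfectPhylogeny 3 chars := by
  obtain ⟨V, _, T, β, hT, hτ, hβ⟩ := h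
  choose τ hτ using hτ
  choose i j hij hi hj using hC
  obtain ⟨k, hki, hkj, hk⟩ : ∃ k : F → Fin 3, (∀ f, i f ≠ k f) ∧ (∀ f, j f ≠ k f) ∧
      ∀ f s, s = i f ∨ s = j f ∨ s = k f := by
    have : ∀ a b : Fin 3, a ≠ b → ∃ c, a ≠ c ∧ b ≠ c ∧ ∀ s, s = a ∨ s = b ∨ s = c := by decide
    choose k hk using fun f => this _ _ (hij f)
    exact ⟨k, fun f => (hk f).1, fun f => (hk f).2.1, fun f => (hk f).2.2⟩
  refine ⟨V, inferInstance, T, fun v f => if β v ⟨(f, i f), hi f⟩ = 0 then i f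
    else if β v ⟨(f, j f), hj f⟩ = 0 then j f else k f, hT, fun x => ⟨τ x, fun f => ?_⟩,
    fun f => hT.isAcyclic.preconnected_induce_ite (hβ _) (hβ _) (hij f) (hki f) (hkj f)⟩
  simp only [hτ, bin_eq_zero_iff]
  rcases hk f (chars f x) with h | h | h
  · simp [h]
  · simp [h, (hij f).symm]
  · simp [h, (hki f).symm, (hkj f).symm]

end Phylogeny

section Clusters

variable {X G : Type} [Fintype X]

-- Empty members are left out: they would lie below every cluster and break `isChain_Ici`.
abbrev Cluster (A : G → Finset X) : Type :=
  {s : Finset X // s.Nonempty ∧ (s = univ ∨ s ∈ Set.range A)}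

instance [Nonempty X] (A : G → Finset X) : OrderTop (Cluster A) where
  top := ⟨univ, univ_nonempty, Or.inl rfl⟩
  le_top c := subset_univ c.1

lemma Cluster.preconnected_induce_not_subset [Nonempty X] (A : G → Finset X) (g : G) :
    ((hasse (Cluster A)).induce {c | ¬ c.1 ⊆ A g}).Preconnected :=
  IsUpperSet.preconnected_induce_hasse fun _ _ hcd hc hd => hc (Subset.trans hcd hd)

lemma Cluster.preconnected_induce_subset (A : G → Finset X) (g : G) :
    ((hasse (Cluster A)).induce {c | c.1 ⊆ A g}).Preconnected := by
  refine Set.OrdConnected.preconnected_induce_hasse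
    (IsLowerSet.ordConnected fun _ _ hdc hc => Subset.trans hdc hc) fun c hc d hd => ?_
  exact ⟨⟨A g, c.2.1.mono hc, Or.inr ⟨g, rfl⟩⟩, Subset.rfl, hc, hd⟩

variable {A : G → Finset X} (hA : ∀ g g' x, x ∈ A g → x ∈ A g' → A g ⊆ A g' ∨ A g' ⊆ A g)
include hA

lemma Cluster.le_total_of_mem {c d : Cluster A} {x : X} (hc : x ∈ c.1) (hd : x ∈ d.1) :
    c ≤ d ∨ d ≤ c := by
  show c.1 ⊆ d.1 ∨ d.1 ⊆ c.1
  obtain ⟨-, hc' | ⟨g, hg⟩⟩ := c.2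
  · exact Or.inr (by rw [hc']; exact subset_univ _)
  obtain ⟨-, hd' | ⟨g', hg'⟩⟩ := d.2
  · exact Or.inl (by rw [hd']; exact subset_univ _)
  rw [← hg] at hc ⊢
  rw [← hg'] at hd ⊢
  exact hA g g' x hc hd

lemma Cluster.isChain_Ici (c : Cluster A) : IsChain (· ≤ ·) (Set.Ici c) := by
  obtain ⟨x, hx⟩ := c.2.1
  intro d hd e he _
  exact Cluster.le_total_of_mem hA (hd hx) (he hx)

lemma Cluster.exists_subset_iff_mem [Nonempty X] (x : X) :
    ∃ c : Cluster A, ∀ g, c.1 ⊆ A g ↔ x ∈ A g := by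
  obtain ⟨c, hc⟩ := (Set.toFinite {c : Cluster A | x ∈ c.1}).exists_minimal
    ⟨⊤, mem_univ x⟩
  refine ⟨c, fun g => ⟨fun h => h hc.1, fun hx => ?_⟩⟩
  let d : Cluster A := ⟨A g, ⟨x, hx⟩, Or.inr ⟨g, rfl⟩⟩
  rcases Cluster.le_total_of_mem hA hc.1 (d := d) hx with h | h
  · exact h
  · exact hc.2 hx h

end Clusters

theorem PerfectPhylogeny.of_pairwiseCompatible {X G : Type} [Fintype X] [Fintype G]
    {β : G → X → Fin 2} (h : PairwiseCompatible 2 β) : PerfectPhylogeny 2 β := by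
  classical
  rcases isEmpty_or_nonempty X with hX | hX
  · exact .of_isEmpty 2 β
  obtain ⟨x₀⟩ := id hX
  set A : G → Finset X := fun g => univ.filter fun x => β g x ≠ β g x₀
  have hmem : ∀ g x, x ∈ A g ↔ β g x ≠ β g x₀ := by simp [A]
  have hcoe : ∀ g, (A g : Set X) = {x | β g x ≠ β g x₀} := by simp [A]
  have hA : ∀ g g' x, x ∈ A g → x ∈ A g' → A g ⊆ A g' ∨ A g' ⊆ A g := by
    intro g g' x hx hx'
    rcases eq_or_ne g g' with rfl | hne
    · exact Or.inl subset_rfl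
    rw [hmem] at hx hx'
    simpa only [← coe_subset, hcoe] using (h g g' hne).setOf_ne_subset_or_subset x₀ ⟨x, hx, hx'⟩
  choose τ hτ using Cluster.exists_subset_iff_mem hA
  have hrev : ∀ s t : Fin 2, s ≠ t ↔ s = t.rev := by decide
  have hrev_ne : ∀ t : Fin 2, t ≠ t.rev := by decide
  refine ⟨Cluster A, Fintype.ofFinite _, hasse _,
    fun c g => if c.1 ⊆ A g then (β g x₀).rev else β g x₀,
    hasse_isTree (Cluster.isChain_Ici hA), fun x => ⟨τ x, fun g => ?_⟩, fun g s => ?_⟩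
  · simp only [hτ, hmem]
    by_cases hx : β g x = β g x₀
    · simp [hx]
    · simp [hx, ((hrev _ _).1 hx).symm]
  by_cases hs : s = β g x₀
  · have : {c : Cluster A | (if c.1 ⊆ A g then (β g x₀).rev else β g x₀) = s} =
        {c | ¬ c.1 ⊆ A g} := by
      ext c; by_cases hc : c.1 ⊆ A g <;> simp [hc, hs, (hrev_ne _).symm]
    exact this ▸ Cluster.preconnected_induce_not_subset A g
  · have : {c : Cluster A | (if c.1 ⊆ A g then (β g x₀).rev else β g x₀) = s} =
        {c | c.1 ⊆ A g} := by
      ext c; by_cases hc : c.1 ⊆ A g <;> simp [hc, hrev_ne, (hrev _ _).1 hs]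
    exact this ▸ Cluster.preconnected_induce_subset A g

/-- Dress–Steel: a finite family of 3-state characters has a perfect
phylogeny iff there is a set `C` of binarized characters (represented by pairs
`(f, i)` with `f` a character and `i` a state) that is pairwise compatible and
contains at least two of the three binarizations of each character. -/
theorem three_state_pp_iff_binarized_selection
    {X F : Type} [Fintype X] [Fintype F] (chars : F → X → Fin 3) :
    PerfectPhylogeny 3 chars ↔
      ∃ C : Finset (F × Fin 3),
        (∀ p ∈ C, ∀ q ∈ C, PairPP 2 (bin (chars p.1) p.2) (bin (chars q.1) q.2)) ∧
        (∀ f : F, ∃ i j : Fin 3, i ≠ j ∧ (f, i) ∈ C ∧ (f, j) ∈ C) := by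
  refine ⟨PerfectPhylogeny.exists_binarized_selection, fun ⟨C, hpair, htwo⟩ => ?_⟩
  exact .of_binarized C htwo (.of_pairwiseCompatible fun p q _ => hpair _ p.2 _ q.2)
end

section
/- Let c and d be 3-state characters on a finite set of taxa X such that the pair {c, d} has a perfect phylogeny, and let i be a state of c. If there is a path p1–p2–p3–p4–p5 of length four (four edges and five pairwise distinct vertices) in the partition intersection graph of c and d with middle vertex p3 = (c, i), then there exist two distinct states j, k of d such that the pair of 2-state characters {c(i), d(j)} has no perfect phylogeny and the pair {c(i), d(k)} has no perfect phylogeny. -/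
/-!
The partition intersection graph is bipartite, so the path is
`(c,i₁) – (d,j) – (c,i) – (d,k) – (c,i₂)` with `j ≠ k` and `i₁, i₂ ≠ i`. Its four edges are taxa
with states `(i₁,j), (i,j), (i,k), (i₂,k)`, which under `c(i)` and `d(j)` (and likewise `d(k)`)
show all four gametes `00, 01, 10, 11`. Four gametes are incompatible: in a tree where both
states of the second character are connected, exactly one edge joins them, and each of the two
disjoint connected state sets of the first character has to contain that edge.
-/

namespace SimpleGraph

variable {V : Type} {G : SimpleGraph V}

lemma Preconnected.exists_walk_support_subset_s13 {S : Set V} (hS : (G.induce S).Preconnected)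
    {x y : V} (hx : x ∈ S) (hy : y ∈ S) : ∃ w : G.Walk x y, ∀ z ∈ w.support, z ∈ S := by
  obtain ⟨w⟩ := hS ⟨x, hx⟩ ⟨y, hy⟩
  refine ⟨w.map (Embedding.induce S).toHom, fun z hz => ?_⟩
  replace hz : z ∈ (w.map (Embedding.induce S).toHom).support := hz
  rw [Walk.support_map, List.mem_map] at hz
  obtain ⟨u, -, rfl⟩ := hz
  exact u.2

lemma IsAcyclic.eq_of_adj_of_mem_of_notMem (hG : G.IsAcyclic) {S : Set V}
    (hS : (G.induce S).Preconnected) (hSc : (G.induce Sᶜ).Preconnected)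
    {x y u v : V} (hxy : G.Adj x y) (huv : G.Adj u v)
    (hx : x ∈ S) (hy : y ∉ S) (hu : u ∈ S) (hv : v ∉ S) : x = u ∧ y = v := by
  obtain ⟨wS, hwS⟩ := hS.exists_walk_support_subset_s13 hx hu
  obtain ⟨wSc, hwSc⟩ := hSc.exists_walk_support_subset_s13 (Set.mem_compl hv) (Set.mem_compl hy)
  -- The walk `x ⤳ u` inside `S`, across `u v`, then `v ⤳ y` inside `Sᶜ` uses the bridge `x y`.
  have hbridge := isBridge_iff_forall_walk_mem_edges.mp (isAcyclic_iff_forall_isBridge.mp hG hxy)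
    (wS.append (huv.toWalk.append wSc))
  simp only [Walk.edges_append, List.mem_append, Walk.edges_cons, Walk.edges_nil,
    List.mem_singleton] at hbridge
  rcases hbridge with hmem | hmem | hmem
  · exact absurd (hwS y (wS.snd_mem_support_of_mem_edges hmem)) hy
  · rcases Sym2.eq_iff.mp hmem with h | ⟨rfl, -⟩
    · exact h
    · exact absurd hx hv
  · exact absurd hx (hwSc x (wSc.fst_mem_support_of_mem_edges hmem))

lemma IsAcyclic.inter_nonempty_of_preconnected (hG : G.IsAcyclic) {S A B : Set V}
    (hS : (G.induce S).Preconnected) (hSc : (G.induce Sᶜ).Preconnected)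
    (hA : (G.induce A).Preconnected) (hB : (G.induce B).Preconnected)
    (hAS : (A ∩ S).Nonempty) (hASc : (A \ S).Nonempty)
    (hBS : (B ∩ S).Nonempty) (hBSc : (B \ S).Nonempty) : (A ∩ B).Nonempty := by
  obtain ⟨a, haA, haS⟩ := hAS
  obtain ⟨a', ha'A, ha'S⟩ := hASc
  obtain ⟨b, hbB, hbS⟩ := hBS
  obtain ⟨b', hb'B, hb'S⟩ := hBSc
  obtain ⟨wA, hwA⟩ := hA.exists_walk_support_subset_s13 haA ha'A
  obtain ⟨wB, hwB⟩ := hB.exists_walk_support_subset_s13 hbB hb'B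
  obtain ⟨dA, hdA, hdAS, hdAS'⟩ := wA.exists_boundary_dart S haS ha'S
  obtain ⟨dB, hdB, hdBS, hdBS'⟩ := wB.exists_boundary_dart S hbS hb'S
  obtain ⟨hfst, -⟩ :=
    hG.eq_of_adj_of_mem_of_notMem hS hSc dA.adj dB.adj hdAS hdAS' hdBS hdBS'
  refine ⟨dA.fst, hwA _ (wA.dart_fst_mem_support_of_mem_darts hdA), ?_⟩
  rw [hfst]
  exact hwB _ (wB.dart_fst_mem_support_of_mem_darts hdB)

end SimpleGraph

lemma Fin.two_setOf_eq_one_eq_compl {V : Type} (f : V → Fin 2) :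
    {v | f v = 1} = {v | f v = 0}ᶜ := by
  ext v
  simp only [Set.mem_ofPred_eq, Set.mem_compl_iff]
  omega

theorem not_pairPP_of_four_gametes {X : Type} [Fintype X] (a b : X → Fin 2)
    (h : ∀ s t, ∃ x, a x = s ∧ b x = t) : ¬ PairPP 2 a b := by
  rintro ⟨V, _, T, ℓ, hT, hocc, hconn⟩
  have hvert : ∀ s t, ∃ v, ℓ v 0 = s ∧ ℓ v 1 = t := fun s t => by
    obtain ⟨x, hxa, hxb⟩ := h s t
    obtain ⟨v, hv⟩ := hocc x
    exact ⟨v, (hv 0).trans hxa, (hv 1).trans hxb⟩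
  have hcompl := hconn 1 1
  rw [Fin.two_setOf_eq_one_eq_compl] at hcompl
  have hsides : ∀ s, ({v | ℓ v 0 = s} ∩ {v | ℓ v 1 = 0}).Nonempty ∧
      ({v | ℓ v 0 = s} \ {v | ℓ v 1 = 0}).Nonempty := fun s => by
    obtain ⟨v, hv0, hv1⟩ := hvert s 0
    obtain ⟨w, hw0, hw1⟩ := hvert s 1
    exact ⟨⟨v, hv0, hv1⟩, ⟨w, hw0, by simp [hw1]⟩⟩
  obtain ⟨v, hv0, hv1⟩ := hT.isAcyclic.inter_nonempty_of_preconnected (hconn 1 0) hcompl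
    (hconn 0 0) (hconn 0 1) (hsides 0).1 (hsides 0).2 (hsides 1).1 (hsides 1).2
  exact zero_ne_one (hv0.symm.trans hv1)

lemma not_pairPP_bin_of_realizes {X : Type} [Fintype X] {c d : X → Fin 3}
    {i i₁ i₂ j k : Fin 3}
    (hjk : j ≠ k) (hi₁ : i₁ ≠ i) (hi₂ : i₂ ≠ i)
    (hij : realizes c d i j) (hik : realizes c d i k)
    (hi₁j : realizes c d i₁ j) (hi₂k : realizes c d i₂ k) :
    ¬ PairPP 2 (bin c i) (bin d j) := by
  refine not_pairPP_of_four_gametes _ _ fun s t => ?_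
  fin_cases s <;> fin_cases t
  · exact hij.imp fun x hx => by simp [bin, hx]
  · exact hik.imp fun x hx => by simp [bin, hx, hjk.symm]
  · exact hi₁j.imp fun x hx => by simp [bin, hx, hi₁]
  · exact hi₂k.imp fun x hx => by simp [bin, hx, hi₂, hjk.symm]

section pig

variable {X : Type} {n : ℕ} {a b : X → Fin n}

lemma pig_adj_false_iff {i : Fin n} {v : Bool × Fin n} :
    (pig a b).Adj (false, i) v ↔ ∃ j, v = (true, j) ∧ ∃ x, a x = i ∧ b x = j := by
  obtain ⟨_ | _, j⟩ := v <;> simp [pig, @eq_comm _ _ (b _), and_comm (a := b _ = _)]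

lemma pig_adj_true_iff {j : Fin n} {v : Bool × Fin n} :
    (pig a b).Adj (true, j) v ↔ ∃ i, v = (false, i) ∧ ∃ x, a x = i ∧ b x = j := by
  obtain ⟨_ | _, i⟩ := v <;> simp [pig, @eq_comm _ _ (a _)]

end pig

theorem path_middle_gives_two_incompatibilities_general
    {X : Type} [Fintype X] (c d : X → Fin 3) (i : Fin 3)
    (hp : HasPathLen4Mid (pig c d) (false, i)) :
    ∃ j k : Fin 3, j ≠ k ∧
      ¬ PairPP 2 (bin c i) (bin d j) ∧ ¬ PairPP 2 (bin c i) (bin d k) := by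
  obtain ⟨p, hinj, hadj, hmid⟩ := hp
  have h10 : (pig c d).Adj (p 1) (p 0) := (hadj 0).symm
  have h21 : (pig c d).Adj (p 2) (p 1) := (hadj 1).symm
  have h23 : (pig c d).Adj (p 2) (p 3) := hadj 2
  have h34 : (pig c d).Adj (p 3) (p 4) := hadj 3
  rw [hmid] at h21 h23
  obtain ⟨j, hp1, hij⟩ := pig_adj_false_iff.mp h21
  obtain ⟨k, hp3, hik⟩ := pig_adj_false_iff.mp h23
  rw [hp1] at h10
  rw [hp3] at h34
  obtain ⟨i₁, hp0, hi₁j⟩ := pig_adj_true_iff.mp h10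
  obtain ⟨i₂, hp4, hi₂k⟩ := pig_adj_true_iff.mp h34
  have hjk : j ≠ k := fun h => hinj.ne (by decide : (1 : Fin 5) ≠ 3) (by rw [hp1, hp3, h])
  have hi₁ : i₁ ≠ i := fun h => hinj.ne (by decide : (0 : Fin 5) ≠ 2) (by rw [hp0, hmid, h])
  have hi₂ : i₂ ≠ i := fun h => hinj.ne (by decide : (4 : Fin 5) ≠ 2) (by rw [hp4, hmid, h])
  exact ⟨j, k, hjk, not_pairPP_bin_of_realizes hjk hi₁ hi₂ hij hik hi₁j hi₂k,
    not_pairPP_bin_of_realizes hjk.symm hi₂ hi₁ hik hij hi₂k hi₁j⟩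

/-- if `{c, d}` is compatible and the partition intersection graph of
`c` and `d` has a path of length four with middle vertex `(c, i)` (encoded
`(false, i)`), then `c(i)` is incompatible with two distinct binarizations of `d`. -/
theorem path_middle_gives_two_incompatibilities
    {X : Type} [Fintype X] (c d : X → Fin 3) (h : PairPP 3 c d) (i : Fin 3)
    (hp : HasPathLen4Mid (pig c d) (false, i)) :
    ∃ j k : Fin 3, j ≠ k ∧
      ¬ PairPP 2 (bin c i) (bin d j) ∧ ¬ PairPP 2 (bin c i) (bin d k) :=
  path_middle_gives_two_incompatibilities_general c d i hp
end
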